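/- arXiv:2601.12461 — 3 statements merged into one kernel-verified Lean document; each statement's English description precedes it below -/
import Mathlib

section
/- For real numbers a, b and parameters n ≥ 4 and γ ≥ √(n-3)/2, the quadratic form ((n-2)/(n-3)·γ − 1)·a² + (2γ/(n-3) − 1)·a·b + (γ/(n-3))·b² is nonnegative. -/
/-! A binary quadratic form with positive `b²`-coefficient and nonpositive discriminant is
nonnegative. With `m = n - 3` the form has `b²`-coefficient `γ / m > 0` and discriminant
`(m - 4γ²) / m`, and `γ ≥ √m / 2` says exactly that `4γ² ≥ m`. -/

theorem quadratic_form_nonneg_of_discrim_nonpos {K : Type*} [Field K] [LinearOrder K]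
    [IsStrictOrderedRing K] {p q r : K} (hr : 0 < r) (hd : discrim p q r ≤ 0) (x y : K) :
    0 ≤ p * x ^ 2 + q * (x * y) + r * y ^ 2 := by
  have hsq : 4 * r * (p * x ^ 2 + q * (x * y) + r * y ^ 2)
      = (2 * r * y + q * x) ^ 2 - discrim p q r * x ^ 2 := by
    rw [discrim]; ring
  have : 0 ≤ 4 * r * (p * x ^ 2 + q * (x * y) + r * y ^ 2) := by
    rw [hsq]; nlinarith [sq_nonneg (2 * r * y + q * x), sq_nonneg x]
  exact nonneg_of_mul_nonneg_right this (by positivity)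

theorem discrim_V₁_form {m : ℝ} (hm : m ≠ 0) (γ : ℝ) :
    discrim ((m + 1) / m * γ - 1) (2 * γ / m - 1) (γ / m) = (m - 4 * γ ^ 2) / m := by
  rw [discrim]; field_simp; ring

/-- The quadratic form underlying the estimate `V₁ ≥ 0`: for `n ≥ 4` and
`γ ≥ √(n-3)/2`, the form `((n-2)/(n-3)·γ − 1)a² + (2γ/(n-3) − 1)ab + (γ/(n-3))b²`
is nonnegative for all real `a, b`. -/
theorem quadratic_form_nonneg (n : ℕ) (hn : 4 ≤ n) (γ a b : ℝ)
    (hγ : Real.sqrt ((n : ℝ) - 3) / 2 ≤ γ) :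
    0 ≤ (((n : ℝ) - 2) / ((n : ℝ) - 3) * γ - 1) * a ^ 2
        + (2 * γ / ((n : ℝ) - 3) - 1) * (a * b)
        + γ / ((n : ℝ) - 3) * b ^ 2 := by
  set m : ℝ := (n : ℝ) - 3
  have hm : 0 < m := by
    have : (4 : ℝ) ≤ n := by exact_mod_cast hn
    linarith
  have hγ0 : 0 < γ := by linarith [Real.sqrt_pos.mpr hm]
  have hγm : m ≤ 4 * γ ^ 2 := by
    have := (Real.sqrt_le_left (by positivity : (0 : ℝ) ≤ 2 * γ)).mp (by linarith)
    linarith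
  have hd : discrim ((m + 1) / m * γ - 1) (2 * γ / m - 1) (γ / m) ≤ 0 := by
    rw [discrim_V₁_form hm.ne']
    exact div_nonpos_of_nonpos_of_nonneg (by linarith) hm.le
  have hn2 : (n : ℝ) - 2 = m + 1 := by ring
  rw [hn2]
  exact quadratic_form_nonneg_of_discrim_nonpos (by positivity) hd a b
end

section
/- Let n ≥ 4, let γ be a real with √(n-3)/2 ≤ γ, and let λ₃, ..., λ_n be real numbers with H = λ₃ + ... + λ_n. Then γ·∑_{j=3}^n λ_j² + ∑_{j=4}^n λ₃·λ_j ≥ 0. -/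
/-!
Split off `λ₃ =: a` and write `t = ∑_{j ≥ 4} λ_j`, `Q = ∑_{j ≥ 4} λ_j²`. There are `n - 3` indices
`j ≥ 4`, so Cauchy–Schwarz and `n - 3 ≤ 4γ²` give `t² ≤ 4γ²Q`, and then
`4γ (γ (a² + Q) + a t) = (2γa + t)² + (4γ²Q - t²) ≥ 0`.
-/

open Finset

theorem mul_add_sum_sq_add_mul_sum_nonneg {ι : Type*} (s : Finset ι) (f : ι → ℝ) (a : ℝ)
    {γ : ℝ} (hγ : 0 ≤ γ) (hs : (#s : ℝ) ≤ 4 * γ ^ 2) :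
    0 ≤ γ * (a ^ 2 + ∑ i ∈ s, f i ^ 2) + a * ∑ i ∈ s, f i := by
  set t := ∑ i ∈ s, f i
  set Q := ∑ i ∈ s, f i ^ 2
  have hCS : t ^ 2 ≤ 4 * γ ^ 2 * Q :=
    sq_sum_le_card_mul_sum_sq.trans
      (mul_le_mul_of_nonneg_right hs (sum_nonneg fun i _ => sq_nonneg (f i)))
  rcases hγ.eq_or_lt with rfl | hγ
  · have ht : t = 0 := by simpa using hCS
    simp [ht]
  · refine nonneg_of_mul_nonneg_right (a := 4 * γ) ?_ (by positivity)
    calc (0 : ℝ) ≤ (2 * γ * a + t) ^ 2 + (4 * γ ^ 2 * Q - t ^ 2) :=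
          add_nonneg (sq_nonneg _) (sub_nonneg.mpr hCS)
      _ = 4 * γ * (γ * (a ^ 2 + Q) + a * t) := by ring

theorem cast_card_Icc_four_eq (n : ℕ) (hn : 4 ≤ n) : (#(Icc 4 n) : ℝ) = n - 3 := by
  rw [Nat.card_Icc, Nat.cast_sub (by omega)]
  push_cast
  ring

theorem V2_nonneg_general (n : ℕ) (hn : 4 ≤ n) (γ : ℝ)
    (hγ : Real.sqrt ((n : ℝ) - 3) / 2 ≤ γ)
    (lam : ℕ → ℝ) :
    0 ≤ γ * ∑ j ∈ Finset.Icc 3 n, (lam j) ^ 2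
        + ∑ j ∈ Finset.Icc 4 n, lam 3 * lam j := by
  have hγ₀ : 0 ≤ γ := (div_nonneg (Real.sqrt_nonneg _) zero_le_two).trans hγ
  have hcard : (#(Icc 4 n) : ℝ) ≤ 4 * γ ^ 2 :=
    calc (#(Icc 4 n) : ℝ) = Real.sqrt ((n : ℝ) - 3) ^ 2 := by
          rw [← cast_card_Icc_four_eq n hn, Real.sq_sqrt (Nat.cast_nonneg _)]
      _ ≤ (2 * γ) ^ 2 := pow_le_pow_left₀ (Real.sqrt_nonneg _) (by linarith) 2
      _ = 4 * γ ^ 2 := by ring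
  rw [← insert_Icc_add_one_left_eq_Icc (by omega : 3 ≤ n), sum_insert (by simp), ← mul_sum]
  exact mul_add_sum_sq_add_mul_sum_nonneg _ lam (lam 3) hγ₀ hcard

/-- The inequality `V₂ ≥ 0`: for `n ≥ 4`, `γ ≥ √(n-3)/2`, and real numbers
`λ₃, …, λ_n` with sum `H`, one has `γ·∑_{j=3}^n λ_j² + ∑_{j=4}^n λ₃·λ_j ≥ 0`. -/
theorem V2_nonneg (n : ℕ) (hn : 4 ≤ n) (γ : ℝ)
    (hγ : Real.sqrt ((n : ℝ) - 3) / 2 ≤ γ)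
    (lam : ℕ → ℝ) (H : ℝ) (hH : H = ∑ j ∈ Finset.Icc 3 n, lam j) :
    0 ≤ γ * ∑ j ∈ Finset.Icc 3 n, (lam j) ^ 2
        + ∑ j ∈ Finset.Icc 4 n, lam 3 * lam j :=
  V2_nonneg_general n hn γ hγ lam
end

section
/- Let a, b, c be vectors in an inner product space (representing ∇log ρ₁, ∇log ρ₂, ∇log ω₂ on Σ₂ with b = a + c), let H be a real number, and suppose |∇_{Σ₁} log ρ₁|² = |a|² + H² (decomposition into tangential and normal parts). Then for 0 < γ ≤ 3(n-1)/(4(n-2)) with n ≥ 4: γ²·((n-2)/(n-1))·|b|² − γ·(|a|² + H²) − γ·⟨b, b − a⟩ ≤ −γ·H². -/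
open scoped RealInnerProductSpace

/-! Expanding `‖b / 2 - a‖² ≥ 0` gives `⟪b, b - a⟫ ≥ (3/4)‖b‖² - ‖a‖²`, while the bound on `γ`
says exactly `γ (n-2)/(n-1) ≤ 3/4`. Hence the `‖b‖²` terms cancel and the `‖a‖²` terms cancel,
leaving `-γ H²`. -/

theorem three_div_four_mul_norm_sq_sub_le_inner_sub {E : Type*} [NormedAddCommGroup E]
    [InnerProductSpace ℝ E] (a b : E) : 3 / 4 * ‖b‖ ^ 2 - ‖a‖ ^ 2 ≤ ⟪b, b - a⟫ := by
  have h := sq_nonneg ‖(1 / 2 : ℝ) • b - a‖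
  rw [norm_sub_sq_real, norm_smul, real_inner_smul_left] at h
  rw [inner_sub_right, real_inner_self_eq_norm_sq]
  norm_num at h
  linarith

theorem mul_div_le_three_div_four_of_le {x γ : ℝ} (hx : 2 < x)
    (hγ : γ ≤ 3 * (x - 1) / (4 * (x - 2))) : γ * ((x - 2) / (x - 1)) ≤ 3 / 4 := by
  rw [le_div_iff₀ (by linarith)] at hγ
  rw [← mul_div_assoc, div_le_div_iff₀ (by linarith) (by norm_num)]
  linarith

theorem gradient_term_estimate_general {E : Type*} [NormedAddCommGroup E] [InnerProductSpace ℝ E]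
    (a b : E) (H : ℝ) (n : ℕ) (hn : 4 ≤ n)
    (γ : ℝ) (hγ0 : 0 < γ) (hγ : γ ≤ 3 * ((n : ℝ) - 1) / (4 * ((n : ℝ) - 2))) :
    γ ^ 2 * (((n : ℝ) - 2) / ((n : ℝ) - 1)) * ‖b‖ ^ 2
      - γ * (‖a‖ ^ 2 + H ^ 2) - γ * ⟪b, b - a⟫ ≤ -γ * H ^ 2 := by
  have hcoef := mul_div_le_three_div_four_of_le
    (by exact_mod_cast (show 2 < n by omega)) hγ
  have hbracket : γ * (((n : ℝ) - 2) / ((n : ℝ) - 1)) * ‖b‖ ^ 2 - ‖a‖ ^ 2 - ⟪b, b - a⟫ ≤ 0 := by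
    linarith [mul_le_mul_of_nonneg_right hcoef (sq_nonneg ‖b‖),
      three_div_four_mul_norm_sq_sub_le_inner_sub a b]
  calc _ = γ * (γ * (((n : ℝ) - 2) / ((n : ℝ) - 1)) * ‖b‖ ^ 2 - ‖a‖ ^ 2 - ⟪b, b - a⟫)
        - γ * H ^ 2 := by ring
    _ ≤ -γ * H ^ 2 := by linarith [mul_nonpos_of_nonneg_of_nonpos hγ0.le hbracket]

/-- Gradient-term estimate (es0): with `a = ∇_{Σ₂} log ρ₁`, `b = ∇_{Σ₂} log ρ₂`,
`c = ∇_{Σ₂} log ω₂`, `b = a + c`, mean curvature `H` (so `|∇_{Σ₁} log ρ₁|² = |a|² + H²`),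
and `0 < γ ≤ 3(n-1)/(4(n-2))` with `n ≥ 4`:
`γ²((n-2)/(n-1))|b|² − γ(|a|² + H²) − γ⟨b, b − a⟩ ≤ −γH²`. -/
theorem gradient_term_estimate {E : Type*} [NormedAddCommGroup E] [InnerProductSpace ℝ E]
    (a b c : E) (hb : b = a + c) (H : ℝ) (n : ℕ) (hn : 4 ≤ n)
    (γ : ℝ) (hγ0 : 0 < γ) (hγ : γ ≤ 3 * ((n : ℝ) - 1) / (4 * ((n : ℝ) - 2))) :
    γ ^ 2 * (((n : ℝ) - 2) / ((n : ℝ) - 1)) * ‖b‖ ^ 2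
      - γ * (‖a‖ ^ 2 + H ^ 2) - γ * ⟪b, b - a⟫ ≤ -γ * H ^ 2 :=
  gradient_term_estimate_general a b H n hn γ hγ0 hγ
end
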